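/- arXiv:1611.05733 — 4 statements merged into one kernel-verified Lean document; each statement's English description precedes it below -/
import Mathlib

section
/- For the modified polynomials with alternating signs and any z with |z| = 1, |P_k(z)| ≤ √2 · 2^{k/2}; that is, the coefficient sequence satisfies the root-N property at dyadic lengths. -/
/-! The parallelogram law turns the recurrence into `|P_{k+1}|² + |Q_{k+1}|² = 2 (|P_k|² + |Q_k|²)`
on the unit circle, where the twist `±z^{2^k}` has modulus one; hence `|P_k|² + |Q_k|² = 2^{k+1}`
there, and `|P_k| ≤ √(2^{k+1})`. -/

open Polynomial

theorem norm_sq_add_norm_sq_eq_two_pow_mul {E : Type*} [NormedAddCommGroup E]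
    [InnerProductSpace ℝ E] (a b c : ℕ → E) (hc : ∀ k, ‖c k‖ = ‖b k‖)
    (ha : ∀ k, a (k + 1) = a k + c k) (hb : ∀ k, b (k + 1) = a k - c k) (k : ℕ) :
    ‖a k‖ ^ 2 + ‖b k‖ ^ 2 = 2 ^ k * (‖a 0‖ ^ 2 + ‖b 0‖ ^ 2) := by
  induction k with
  | zero => ring
  | succ k ih =>
    rw [ha, hb, parallelogram_law_with_norm ℝ, hc k]
    linear_combination 2 * ih

theorem Real.sqrt_two_pow_succ (k : ℕ) :
    √(2 ^ (k + 1)) = √2 * 2 ^ ((k : ℝ) / 2) := by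
  rw [pow_succ, mul_comm, Real.sqrt_mul zero_le_two]
  congr 1
  rw [Real.sqrt_eq_rpow, ← Real.rpow_natCast, ← Real.rpow_mul zero_le_two, mul_one_div]

theorem modified_rudin_shapiro_root_N
    (P Q : ℕ → Polynomial ℂ)
    (hP0 : P 0 = X) (hQ0 : Q 0 = X)
    (hP : ∀ k, P (k + 1) = P k + (-1 : Polynomial ℂ) ^ k * X ^ (2 ^ k) * Q k)
    (hQ : ∀ k, Q (k + 1) = P k - (-1 : Polynomial ℂ) ^ k * X ^ (2 ^ k) * Q k) :
    ∀ k, ∀ z : ℂ, ‖z‖ = 1 →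
      ‖(P k).eval z‖ ≤ Real.sqrt 2 * 2 ^ ((k : ℝ) / 2) := by
  intro k z hz
  have energy : ‖(P k).eval z‖ ^ 2 + ‖(Q k).eval z‖ ^ 2 = 2 ^ (k + 1) := by
    rw [norm_sq_add_norm_sq_eq_two_pow_mul (fun k ↦ (P k).eval z) (fun k ↦ (Q k).eval z)
      (fun k ↦ (-1) ^ k * z ^ 2 ^ k * (Q k).eval z) (fun k ↦ by simp [hz])
      (fun k ↦ by simp [hP]) (fun k ↦ by simp [hQ])]
    simp [hP0, hQ0, hz]
    ring
  rw [← Real.sqrt_two_pow_succ]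
  exact Real.le_sqrt_of_sq_le (by linarith [sq_nonneg ‖(Q k).eval z‖])
end

section
/- For the modified alternating-sign polynomials, every coefficient of P_k of index n with 1 ≤ n ≤ 2^k is ±1, and for even k the first 2^k coefficients of P_{k+2} coincide with those of P_k. -/
/-! Since `Q_k` has no constant term and `P_k` has degree at most `2^k`, the coefficients of
`P_k ± X^{2^k} Q_k` are those of `P_k` on `[0, 2^k]` followed by `±` those of `Q_k` on
`(2^k, 2^{k+1}]`. Hence both polynomials carry unit coefficients exactly on `[1, 2^k]`, and each
`P_{k+1}` extends `P_k`. -/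

open Polynomial

namespace Polynomial

variable {R : Type*} [CommRing R]

structure HasUnitCoeffsOn (F : R[X]) (m : ℕ) : Prop where
  coeff_zero : F.coeff 0 = 0
  natDegree_le : F.natDegree ≤ m
  isUnit_coeff : ∀ n, 1 ≤ n → n ≤ m → IsUnit (F.coeff n)

theorem hasUnitCoeffsOn_X : HasUnitCoeffsOn (X : R[X]) 1 where
  coeff_zero := coeff_X_zero
  natDegree_le := natDegree_X_le
  isUnit_coeff n h1 h2 := by
    rw [show n = 1 by omega, coeff_X_one]
    exact isUnit_one

theorem coeff_C_mul_X_pow_mul (c : R) (m n : ℕ) (B : R[X]) :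
    (C c * X ^ m * B).coeff n = if m ≤ n then c * B.coeff (n - m) else 0 := by
  rw [mul_assoc, coeff_C_mul, coeff_X_pow_mul', mul_ite, mul_zero]

variable {A B : R[X]} {c : R} {m n : ℕ}

theorem coeff_add_C_mul_X_pow_mul_of_le (hB : B.coeff 0 = 0) (hn : n ≤ m) :
    (A + C c * X ^ m * B).coeff n = A.coeff n := by
  rw [coeff_add, coeff_C_mul_X_pow_mul]
  split_ifs with h
  · rw [show n - m = 0 by omega, hB, mul_zero, add_zero]
  · rw [add_zero]

theorem coeff_add_C_mul_X_pow_mul_of_lt (hA : A.natDegree ≤ m) (hn : m < n) :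
    (A + C c * X ^ m * B).coeff n = c * B.coeff (n - m) := by
  rw [coeff_add, coeff_C_mul_X_pow_mul, if_pos hn.le,
    coeff_eq_zero_of_natDegree_lt (hA.trans_lt hn), zero_add]

theorem HasUnitCoeffsOn.add_C_mul_X_pow_mul (hA : HasUnitCoeffsOn A m)
    (hB : HasUnitCoeffsOn B m) (hc : IsUnit c) :
    HasUnitCoeffsOn (A + C c * X ^ m * B) (2 * m) where
  coeff_zero := by
    rw [coeff_add_C_mul_X_pow_mul_of_le hB.coeff_zero (Nat.zero_le m), hA.coeff_zero]
  natDegree_le := by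
    rw [natDegree_le_iff_coeff_eq_zero]
    intro n hn
    have hB' : B.natDegree < n - m := by have := hB.natDegree_le; omega
    rw [coeff_add_C_mul_X_pow_mul_of_lt hA.natDegree_le (by omega),
      coeff_eq_zero_of_natDegree_lt hB', mul_zero]
  isUnit_coeff n h1 h2 := by
    rcases le_or_gt n m with h | h
    · rw [coeff_add_C_mul_X_pow_mul_of_le hB.coeff_zero h]
      exact hA.isUnit_coeff n h1 h
    · rw [coeff_add_C_mul_X_pow_mul_of_lt hA.natDegree_le h]
      exact hc.mul (hB.isUnit_coeff _ (by omega) (by omega))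

end Polynomial

theorem modified_rudin_shapiro_coeffs
    (P Q : ℕ → Polynomial ℤ)
    (hP0 : P 0 = X) (hQ0 : Q 0 = X)
    (hP : ∀ k, P (k + 1) = P k + (-1 : Polynomial ℤ) ^ k * X ^ (2 ^ k) * Q k)
    (hQ : ∀ k, Q (k + 1) = P k - (-1 : Polynomial ℤ) ^ k * X ^ (2 ^ k) * Q k) :
    (∀ k, ∀ n, 1 ≤ n → n ≤ 2 ^ k → (P k).coeff n = 1 ∨ (P k).coeff n = -1) ∧
    (∀ k, Even k → ∀ n, 1 ≤ n → n ≤ 2 ^ k → (P (k + 2)).coeff n = (P k).coeff n) := by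
  have hsign : ∀ k, (-1 : ℤ[X]) ^ k = C ((-1) ^ k) := fun k => by simp
  have hP' : ∀ k, P (k + 1) = P k + C ((-1) ^ k) * X ^ (2 ^ k) * Q k := fun k => by
    rw [hP, hsign]
  have hQ' : ∀ k, Q (k + 1) = P k + C (-(-1) ^ k) * X ^ (2 ^ k) * Q k := fun k => by
    rw [hQ, hsign, map_neg, neg_mul, neg_mul, sub_eq_add_neg]
  have hunit : ∀ k, HasUnitCoeffsOn (P k) (2 ^ k) ∧ HasUnitCoeffsOn (Q k) (2 ^ k) := by
    intro k
    induction k with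
    | zero => rw [hP0, hQ0, pow_zero]; exact ⟨hasUnitCoeffsOn_X, hasUnitCoeffsOn_X⟩
    | succ k ih =>
      have hs : IsUnit ((-1 : ℤ) ^ k) := isUnit_neg_one.pow k
      rw [hP', hQ', pow_succ']
      exact ⟨ih.1.add_C_mul_X_pow_mul ih.2 hs, ih.1.add_C_mul_X_pow_mul ih.2 hs.neg⟩
  have hstable : ∀ k n, n ≤ 2 ^ k → (P (k + 1)).coeff n = (P k).coeff n := fun k n hn => by
    rw [hP', coeff_add_C_mul_X_pow_mul_of_le (hunit k).2.coeff_zero hn]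
  refine ⟨fun k n h1 h2 => Int.isUnit_iff.mp ((hunit k).1.isUnit_coeff n h1 h2), ?_⟩
  intro k _ n _ hn
  rw [hstable (k + 1) n (hn.trans (Nat.pow_le_pow_right two_pos k.le_succ)), hstable k n hn]
end

section
/- In the fixed point of the substitution σ: A↦ABDB, B↦ABAC, C↦DCDB, D↦DCAC starting from seed A, the letter A occurs with two distinct predecessors, namely both B and C occur immediately before some occurrence of A; hence the fixed point sequence is aperiodic (not eventually periodic). -/
/-- The substitution σ: A ↦ ABDB, B ↦ ABAC, C ↦ DCDB, D ↦ DCAC (letters coded 0,1,2,3). -/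
def sigmaSub : Fin 4 → List (Fin 4)
  | 0 => [0, 1, 3, 1]
  | 1 => [0, 1, 0, 2]
  | 2 => [3, 2, 3, 1]
  | 3 => [3, 2, 0, 2]

/-- The fixed point of σ starting from the seed A: the letter at position `n`
is obtained by following the base-4 digits of `n` through the substitution. -/
def sigmaFix (n : ℕ) : Fin 4 :=
  ((Nat.digits 4 n).reverse).foldl (fun a d => (sigmaSub a).getD d 0) 0


/-!
The letter at position `4n + d` of the fixed point is letter `d` of `σ(sigmaFix n)`. The last three letters of
`σ(a)` determine `a`, so a period `4q` of the fixed point descends to a period `q`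
(desubstitution); iterating, an eventual period becomes a genuine one. A genuine period `p`
would make the prefix `AB` reappear at position `p`, but `AB` occurs only at multiples of `4`,
so `p = 4q` and `q` is again a period: infinite descent forces `p = 0`.
-/

lemma eventually_periodic_mul_left {α : Type*} {f : ℕ → α} {N p : ℕ}
    (h : ∀ n, N ≤ n → f (n + p) = f n) (k : ℕ) : ∀ n, N ≤ n → f (n + k * p) = f n := by
  intro n hn
  induction k with
  | zero => simp
  | succ k ih => rw [Nat.succ_mul, ← add_assoc, h _ (by omega), ih]

lemma sigmaFix_four_mul_add (n : ℕ) {d : ℕ} (hd : d < 4) :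
    sigmaFix (4 * n + d) = (sigmaSub (sigmaFix n)).getD d 0 := by
  rcases Nat.eq_zero_or_pos (4 * n + d) with h | h
  · obtain ⟨rfl, rfl⟩ : n = 0 ∧ d = 0 := by omega
    rfl
  · unfold sigmaFix
    rw [Nat.digits_def' (by norm_num) h, show (4 * n + d) % 4 = d by omega,
      show (4 * n + d) / 4 = n by omega, List.reverse_cons, List.foldl_append]
    rfl

lemma eq_of_sigmaSub_getD_eq {a b : Fin 4}
    (h1 : (sigmaSub a).getD 1 0 = (sigmaSub b).getD 1 0)
    (h2 : (sigmaSub a).getD 2 0 = (sigmaSub b).getD 2 0)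
    (h3 : (sigmaSub a).getD 3 0 = (sigmaSub b).getD 3 0) : a = b := by
  revert a b
  decide

lemma sigmaFix_desubstitute {N q : ℕ} (h : ∀ m, N ≤ m → sigmaFix (m + 4 * q) = sigmaFix m) :
    ∀ n, N ≤ 4 * n + 1 → sigmaFix (n + q) = sigmaFix n := by
  intro n hn
  have hblock : ∀ d, 0 < d → d < 4 →
      (sigmaSub (sigmaFix (n + q))).getD d 0 = (sigmaSub (sigmaFix n)).getD d 0 := by
    intro d hd0 hd4
    rw [← sigmaFix_four_mul_add _ hd4, ← sigmaFix_four_mul_add _ hd4,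
      show 4 * (n + q) + d = 4 * n + d + 4 * q by ring]
    exact h _ (by omega)
  exact eq_of_sigmaSub_getD_eq (hblock 1 (by norm_num) (by norm_num))
    (hblock 2 (by norm_num) (by norm_num)) (hblock 3 (by norm_num) (by norm_num))

theorem sigmaFix_periodic_of_eventually_periodic {N p : ℕ}
    (h : ∀ n, N ≤ n → sigmaFix (n + p) = sigmaFix n) : Function.Periodic sigmaFix p := by
  induction N using Nat.strong_induction_on with
  | _ N ih =>
    rcases Nat.eq_zero_or_pos N with rfl | hN
    · exact fun n => h n n.zero_le
    · exact ih ((N + 2) / 4) (by omega) fun n hn =>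
        sigmaFix_desubstitute (eventually_periodic_mul_left h 4) n (by omega)

lemma sigmaFix_ne_zero_of_odd {m : ℕ} (hm : Odd m) : sigmaFix m ≠ 0 := by
  have hletters : ∀ a : Fin 4, (sigmaSub a).getD 1 0 ≠ 0 ∧ (sigmaSub a).getD 3 0 ≠ 0 := by decide
  obtain ⟨q, rfl | rfl⟩ : ∃ q, m = 4 * q + 1 ∨ m = 4 * q + 3 := ⟨m / 4, by grind⟩
  · rw [sigmaFix_four_mul_add q (by norm_num)]
    exact (hletters _).1
  · rw [sigmaFix_four_mul_add q (by norm_num)]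
    exact (hletters _).2

lemma sigmaFix_four_mul_add_three_of_eq_zero {q : ℕ} (h : sigmaFix (4 * q + 2) = 0) :
    sigmaFix (4 * q + 3) = 2 := by
  have hletters : ∀ a : Fin 4, (sigmaSub a).getD 2 0 = 0 → (sigmaSub a).getD 3 0 = 2 := by decide
  rw [sigmaFix_four_mul_add q (by norm_num)] at h ⊢
  exact hletters _ h

lemma four_dvd_of_sigmaFix_eq_zero_of_succ_eq_one {m : ℕ} (h0 : sigmaFix m = 0)
    (h1 : sigmaFix (m + 1) = 1) : 4 ∣ m := by
  have hm : ¬ Odd m := fun hm => sigmaFix_ne_zero_of_odd hm h0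
  obtain ⟨q, rfl | rfl⟩ : ∃ q, m = 4 * q ∨ m = 4 * q + 2 := ⟨m / 4, by grind⟩
  · exact dvd_mul_right 4 q
  · rw [sigmaFix_four_mul_add_three_of_eq_zero h0] at h1
    exact absurd h1 (by decide)

theorem sigmaFix_periodic_iff {p : ℕ} : Function.Periodic sigmaFix p ↔ p = 0 := by
  refine ⟨fun hp => ?_, fun hp => hp ▸ Function.periodic_with_period_zero _⟩
  induction p using Nat.strong_induction_on with
  | _ p ih =>
    have h0 : sigmaFix p = 0 := by rw [← zero_add p, hp 0]; rfl
    have h1 : sigmaFix (p + 1) = 1 := by rw [add_comm, hp 1]; rfl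
    obtain ⟨q, rfl⟩ := four_dvd_of_sigmaFix_eq_zero_of_succ_eq_one h0 h1
    have hq : Function.Periodic sigmaFix q := fun n =>
      sigmaFix_desubstitute (N := 0) (fun m _ => hp m) n (Nat.zero_le _)
    rcases Nat.eq_zero_or_pos q with rfl | hq_pos
    · rfl
    · have := ih q (by omega) hq
      omega

theorem sigma_fixed_point_aperiodic :
    (∃ n, 0 < n ∧ sigmaFix n = 0 ∧ sigmaFix (n - 1) = 1) ∧
    (∃ n, 0 < n ∧ sigmaFix n = 0 ∧ sigmaFix (n - 1) = 2) ∧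
    ¬ ∃ p, 1 ≤ p ∧ ∃ N, ∀ n, N ≤ n → sigmaFix (n + p) = sigmaFix n := by
  refine ⟨⟨4, by norm_num, by decide, by decide⟩, ⟨10, by norm_num, by decide, by decide⟩, ?_⟩
  rintro ⟨p, hp, N, h⟩
  have := sigmaFix_periodic_iff.mp (sigmaFix_periodic_of_eventually_periodic h)
  omega
end

section
/- For the fixed point of σ: A↦ABDB, B↦ABAC, C↦DCDB, D↦DCAC with weights φ(A)=φ(B)=1, φ(C)=φ(D)=−1, the vector v₂ = (1,0,0,−1, 0,1,−1,0, 0,−1,1,0, −1,0,0,1) (indexed by ordered letter pairs) is fixed by the correlation transfer recursion, and pairing v₂ with the correlation vectors Σ̂(k) of the substitution gives 0 for all k ≠ 0; equivalently, the two-point correlations of the balanced-weight sequence vanish for all non-zero distances k with 1 ≤ k ≤ 4. -/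
/-! The correlation vectors take only the two values `Σ̂(1)` and `Σ̂(2)`: `v2` vanishes on the
support of `Σ̂(1)`, and on the support of `Σ̂(2)` its entries are four `1`s and four `-1`s. -/

/-- The vector v₂ ∈ ℝ¹⁶, indexed by ordered letter pairs (A,B,C,D ordering),
with entries φ(a)φ(b) for φ(A)=φ(B)=1, φ(C)=φ(D)=-1. -/
def v2 : Fin 16 → ℝ :=
  ![1, 0, 0, -1, 0, 1, -1, 0, 0, -1, 1, 0, -1, 0, 0, 1]

theorem exists_mem_Icc_apply_eq_of_mul_four_add {α : Type*} {f : ℕ → α}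
    (hper : ∀ n, 1 ≤ n →
      f (4 * n) = f 4 ∧ f (4 * n + 1) = f 1 ∧ f (4 * n + 2) = f 2 ∧ f (4 * n + 3) = f 3)
    {k : ℕ} (hk : 1 ≤ k) : ∃ j ∈ Finset.Icc 1 4, f k = f j := by
  obtain ⟨n, r, hr, rfl⟩ : ∃ n r, r ∈ Finset.Icc 1 4 ∧ k = 4 * n + r :=
    ⟨(k - 1) / 4, (k - 1) % 4 + 1, Finset.mem_Icc.mpr ⟨by omega, by omega⟩, by omega⟩
  refine ⟨r, hr, ?_⟩
  rcases Nat.eq_zero_or_pos n with rfl | hn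
  · simp
  obtain ⟨-, h1, h2, h3⟩ := hper n hn
  obtain rfl | rfl | rfl | rfl : r = 1 ∨ r = 2 ∨ r = 3 ∨ r = 4 := by
    simp only [Finset.mem_Icc] at hr; omega
  · exact h1
  · exact h2
  · exact h3
  · simpa [mul_add] using (hper (n + 1) (by omega)).1

theorem sum_v2_mul_correlation_odd :
    ∑ i, v2 i * ((1 / 8 : ℝ) • ![0, 1, 1, 0, 1, 0, 0, 1, 1, 0, 0, 1, 0, 1, 1, 0]) i = 0 := by
  simp [v2, Fin.sum_univ_succ]

theorem sum_v2_mul_correlation_even :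
    ∑ i, v2 i * ((1 / 8 : ℝ) • ![1, 0, 0, 1, 0, 1, 1, 0, 0, 1, 1, 0, 1, 0, 0, 1]) i = 0 := by
  simp [v2, Fin.sum_univ_succ]

theorem balanced_weight_correlations_vanish
    (Sigmahat : ℕ → Fin 16 → ℝ)
    (h1 : Sigmahat 1 = (1 / 8 : ℝ) • ![0, 1, 1, 0, 1, 0, 0, 1, 1, 0, 0, 1, 0, 1, 1, 0])
    (h2 : Sigmahat 2 = (1 / 8 : ℝ) • ![1, 0, 0, 1, 0, 1, 1, 0, 0, 1, 1, 0, 1, 0, 0, 1])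
    (h3 : Sigmahat 3 = Sigmahat 1) (h4 : Sigmahat 4 = Sigmahat 2)
    (hper : ∀ n, 1 ≤ n →
      Sigmahat (4 * n) = Sigmahat 4 ∧ Sigmahat (4 * n + 1) = Sigmahat 1 ∧
      Sigmahat (4 * n + 2) = Sigmahat 2 ∧ Sigmahat (4 * n + 3) = Sigmahat 3) :
    ∀ k, 1 ≤ k → ∑ i, v2 i * Sigmahat k i = 0 := by
  intro k hk
  obtain ⟨j, hj, hkj⟩ := exists_mem_Icc_apply_eq_of_mul_four_add hper hk
  have hj_odd_or_even : Sigmahat j = Sigmahat 1 ∨ Sigmahat j = Sigmahat 2 := by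
    obtain ⟨hj1, hj4⟩ := Finset.mem_Icc.mp hj
    interval_cases j <;> simp [h3, h4]
  rcases hj_odd_or_even with hodd | heven
  · rw [hkj, hodd, h1]
    exact sum_v2_mul_correlation_odd
  · rw [hkj, heven, h2]
    exact sum_v2_mul_correlation_even
end
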